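/- Let 𝒳 be a nonempty set, R, J ∈ ℕ with R ≥ 1 and J ≥ 1, and H : 𝒳 → (Fin R × Fin J) → ℕ a map (assigning to each time series its leaf-frequency vector over R leaves in each of J trees). Define the LPS similarity S(x,y) = (1/(R·J)) · Σ_{(r,j) ∈ Fin R × Fin J} min(H(x)(r,j), H(y)(r,j)). Then S is symmetric and positive semidefinite, i.e. S is a kernel. (Theorem A.1: LPS is a kernel.) -/

import Mathlib

/-!
`min m n` counts the `k` with `k < m` and `k < n`, so on any finite set of naturals the min
kernel is a sum of rank-one kernels `𝟙[k < m] · 𝟙[k < n]` and hence positive semidefinite.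
The LPS similarity is a nonnegative multiple of a sum of pullbacks of this kernel.
-/

open Finset

def IsPosSemidefKernel {α : Type*} (K : α → α → ℝ) : Prop :=
  ∀ (n : ℕ) (a : Fin n → ℝ) (x : Fin n → α), 0 ≤ ∑ i, ∑ j, a i * a j * K (x i) (x j)

namespace IsPosSemidefKernel

variable {α β ι : Type*}

theorem mul_self (f : α → ℝ) : IsPosSemidefKernel fun x y => f x * f y := by
  intro n a x
  have h : ∑ i, ∑ j, a i * a j * (f (x i) * f (x j)) = (∑ i, a i * f (x i)) ^ 2 := by
    rw [sq, sum_mul_sum]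
    exact sum_congr rfl fun i _ => sum_congr rfl fun j _ => by ring
  exact h ▸ sq_nonneg _

theorem sum {K : ι → α → α → ℝ} (s : Finset ι) (hK : ∀ t ∈ s, IsPosSemidefKernel (K t)) :
    IsPosSemidefKernel fun x y => ∑ t ∈ s, K t x y := by
  intro n a x
  have h : ∑ i, ∑ j, a i * a j * ∑ t ∈ s, K t (x i) (x j) =
      ∑ t ∈ s, ∑ i, ∑ j, a i * a j * K t (x i) (x j) := by
    simp_rw [mul_sum]
    exact (sum_congr rfl fun i _ => sum_comm).trans sum_comm
  exact h ▸ sum_nonneg fun t ht => hK t ht n a x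

theorem const_mul {K : α → α → ℝ} (hK : IsPosSemidefKernel K) {c : ℝ} (hc : 0 ≤ c) :
    IsPosSemidefKernel fun x y => c * K x y := by
  intro n a x
  have h : ∑ i, ∑ j, a i * a j * (c * K (x i) (x j)) =
      c * ∑ i, ∑ j, a i * a j * K (x i) (x j) := by
    simp_rw [mul_sum]
    exact sum_congr rfl fun i _ => sum_congr rfl fun j _ => by ring
  exact h ▸ mul_nonneg hc (hK n a x)

theorem comp {K : β → β → ℝ} (hK : IsPosSemidefKernel K) (f : α → β) :
    IsPosSemidefKernel fun x y => K (f x) (f y) :=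
  fun n a x => hK n a (f ∘ x)

end IsPosSemidefKernel

theorem natCast_min_eq_sum_range {m n N : ℕ} (hm : m ≤ N) :
    ((min m n : ℕ) : ℝ) =
      ∑ k ∈ range N, (if k < m then (1 : ℝ) else 0) * (if k < n then 1 else 0) := by
  simp_rw [ite_zero_mul_ite_zero, mul_one, ← lt_min_iff]
  rw [sum_boole, range_eq_Ico, Ico_filter_lt, Nat.card_Ico, Nat.sub_zero,
    min_eq_right (min_le_of_left_le hm)]

theorem isPosSemidefKernel_min : IsPosSemidefKernel fun m n : ℕ => ((min m n : ℕ) : ℝ) := by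
  intro n a x
  have h : ∀ i j, ((min (x i) (x j) : ℕ) : ℝ) = ∑ k ∈ range (univ.sup x),
      (if k < x i then (1 : ℝ) else 0) * (if k < x j then 1 else 0) :=
    fun i j => natCast_min_eq_sum_range (le_sup (mem_univ i))
  simp_rw [h]
  exact IsPosSemidefKernel.sum (range (univ.sup x))
    (fun k _ => IsPosSemidefKernel.mul_self fun m : ℕ => if k < m then (1 : ℝ) else 0) n a x

theorem LPS_is_kernel_general {𝒳 : Type*} (R J : ℕ)
    (H : 𝒳 → (Fin R × Fin J) → ℕ)
    (S : 𝒳 → 𝒳 → ℝ)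
    (hS : ∀ x y, S x y = (1 / (R * J : ℝ)) *
      ∑ p : Fin R × Fin J, (min (H x p) (H y p) : ℕ)) :
    (∀ x y, S x y = S y x) ∧
    (∀ (n : ℕ) (a : Fin n → ℝ) (x : Fin n → 𝒳),
      0 ≤ ∑ i, ∑ j, a i * a j * S (x i) (x j)) := by
  refine ⟨fun x y => by simp only [hS, min_comm], ?_⟩
  obtain rfl : S = fun x y => (1 / (R * J : ℝ)) * ∑ p, ((min (H x p) (H y p) : ℕ) : ℝ) := by
    funext x y
    rw [hS, Nat.cast_sum]
  exact (IsPosSemidefKernel.sum univ fun p _ => isPosSemidefKernel_min.comp (H · p)).const_mul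
    (by positivity)

theorem LPS_is_kernel {𝒳 : Type*} [Nonempty 𝒳] (R J : ℕ) (hR : 1 ≤ R) (hJ : 1 ≤ J)
    (H : 𝒳 → (Fin R × Fin J) → ℕ)
    (S : 𝒳 → 𝒳 → ℝ)
    (hS : ∀ x y, S x y = (1 / (R * J : ℝ)) *
      ∑ p : Fin R × Fin J, (min (H x p) (H y p) : ℕ)) :
    (∀ x y, S x y = S y x) ∧
    (∀ (n : ℕ) (a : Fin n → ℝ) (x : Fin n → 𝒳),
      0 ≤ ∑ i, ∑ j, a i * a j * S (x i) (x j)) :=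
  LPS_is_kernel_general R J H S hS
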